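/- arXiv:2308.08035 — 5 statements merged into one kernel-verified Lean document; each statement's English description precedes it below -/
import Mathlib

section
/- For positive integers m and n, the number of pairs (i,i') with 0 ≤ i,i' < n and i ≡ i' (mod m) equals n + (2n - m)·⌊n/m⌋ - m·⌊n/m⌋². -/
/-- Number of pairs (i,i') with 0 ≤ i,i' < n and i ≡ i' (mod m). -/
def Cpairs (m n : ℕ) : ℕ :=
  ((Finset.range n ×ˢ Finset.range n).filter fun p => p.1 % m = p.2 % m).card

/-!
Adding the index `n` to `range n` adds the diagonal pair `(n, n)` and, on each side of it, one pair
for every `j < n` with `j ≡ n (mod m)`; there are exactly `⌊n/m⌋` such `j`. Hence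
`Cpairs m (n + 1) = Cpairs m n + 2⌊n/m⌋ + 1`, and the closed form follows by induction on `n`,
since `⌊n/m⌋` increases by one exactly when `m ∣ n + 1`.
-/

open Finset

theorem card_filter_range_mod_eq_mod_self (m n : ℕ) :
    #{j ∈ range n | j % m = n % m} = n / m := by
  rcases m.eq_zero_or_pos with rfl | hm
  · simp
  · have hcount := Nat.count_modEq_card n hm n
    rw [Nat.count_eq_card_filter_range, if_neg (lt_irrefl _), add_zero] at hcount
    exact hcount

theorem cpairs_eq_sum_ite (m n : ℕ) :
    Cpairs m n = ∑ i ∈ range n, ∑ j ∈ range n, if i % m = j % m then 1 else 0 := by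
  rw [Cpairs, card_filter, sum_product]

theorem cpairs_succ (m n : ℕ) : Cpairs m (n + 1) = Cpairs m n + 2 * (n / m) + 1 := by
  have hleft : (∑ i ∈ range n, if i % m = n % m then 1 else 0) = n / m := by
    rw [← card_filter, card_filter_range_mod_eq_mod_self]
  have hright : (∑ j ∈ range n, if n % m = j % m then 1 else 0) = n / m := by
    simp_rw [eq_comm (a := n % m)]
    exact hleft
  simp only [cpairs_eq_sum_ite, sum_range_succ, sum_add_distrib, hleft, hright, if_true]
  ring

theorem stmt0_general (m n : ℕ) :
    (Cpairs m n : ℤ) = (n : ℤ) + (2 * n - m) * (n / m : ℕ) - m * ((n / m : ℕ) : ℤ) ^ 2 := by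
  induction n with
  | zero => simp [Cpairs]
  | succ n ih =>
    rw [cpairs_succ]
    by_cases hdvd : m ∣ n + 1
    · have hmul : (m * (n / m + 1) : ℤ) = n + 1 := by
        exact_mod_cast Nat.succ_div_of_dvd hdvd ▸ Nat.mul_div_cancel' hdvd
      push_cast [Nat.succ_div_of_dvd hdvd, ih]
      linear_combination 2 * hmul
    · push_cast [Nat.succ_div_of_not_dvd hdvd, ih]
      ring

theorem stmt0 (m n : ℕ) (hm : 1 ≤ m) (hn : 1 ≤ n) :
    (Cpairs m n : ℤ) = (n : ℤ) + (2 * n - m) * (n / m : ℕ) - m * ((n / m : ℕ) : ℤ) ^ 2 :=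
  stmt0_general m n
end

section
/- For the radical inverse function φ_b in base b ≥ 2 and nonnegative integers i, i', and any r ≥ 0: ⌊b^r φ_b(i)⌋ = ⌊b^r φ_b(i')⌋ if and only if i ≡ i' (mod b^r). -/
/-- The base-`b` radical inverse `φ_b(i) = ∑_ℓ a_ℓ b^{-(ℓ+1)}` where
`a_ℓ` are the base-`b` digits of `i`. -/
noncomputable def radInv (b i : ℕ) : ℝ :=
  ∑ ℓ ∈ Finset.range (Nat.digits b i).length,
    ((Nat.digits b i).getD ℓ 0 : ℝ) / (b : ℝ) ^ (ℓ + 1)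

/-!
Everything follows from the digit recursion `φ_b(i) = (i mod b + φ_b(⌊i/b⌋)) / b` and
`0 ≤ φ_b < 1`. They give `⌊b^(r+1) φ_b(i)⌋ = b^r (i mod b) + ⌊b^r φ_b(⌊i/b⌋)⌋` with the last
summand in `[0, b^r)`, while `i mod b^(r+1) = i mod b + b (⌊i/b⌋ mod b^r)` with `i mod b < b`;
by uniqueness of such decompositions both sides of the equivalence peel off one digit, and
induction on `r` concludes.
-/

theorem Nat.add_mul_eq_add_mul_iff {B x x' y y' : ℕ} (hx : x < B) (hx' : x' < B) :
    x + B * y = x' + B * y' ↔ x = x' ∧ y = y' := by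
  have hB : 0 < B := by omega
  constructor
  · intro h
    have hmod := congrArg (· % B) h
    have hdiv := congrArg (· / B) h
    simp only [Nat.add_mul_mod_self_left, Nat.mod_eq_of_lt hx, Nat.mod_eq_of_lt hx'] at hmod
    simp only [Nat.add_mul_div_left _ _ hB, Nat.div_eq_of_lt hx, Nat.div_eq_of_lt hx',
      zero_add] at hdiv
    exact ⟨hmod, hdiv⟩
  · rintro ⟨rfl, rfl⟩
    rfl

section RadicalInverse

variable {b : ℕ}

@[simp]
theorem radInv_zero : radInv b 0 = 0 := by
  simp [radInv]

theorem radInv_nonneg (i : ℕ) : 0 ≤ radInv b i :=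
  Finset.sum_nonneg fun _ _ => by positivity

theorem pow_mul_radInv_nonneg (r i : ℕ) : 0 ≤ (b : ℝ) ^ r * radInv b i :=
  mul_nonneg (by positivity) (radInv_nonneg i)

theorem radInv_eq_mod_add_radInv_div (hb : 1 < b) (i : ℕ) :
    radInv b i = ((i % b : ℕ) + radInv b (i / b)) / b := by
  rcases Nat.eq_zero_or_pos i with rfl | hi
  · simp
  rw [radInv, Nat.digits_def' hb hi, List.length_cons, Finset.sum_range_succ', radInv,
    add_div, Finset.sum_div, add_comm]
  congr 1
  · simp
  · refine Finset.sum_congr rfl fun ℓ _ => ?_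
    rw [List.getD_cons_succ, pow_succ, div_div]

theorem radInv_lt_one (hb : 1 < b) (i : ℕ) : radInv b i < 1 := by
  induction i using Nat.strong_induction_on with
  | _ i ih =>
    rcases Nat.eq_zero_or_pos i with rfl | hi
    · simp
    have hbR : (0 : ℝ) < b := by positivity
    have hdigit : ((i % b : ℕ) : ℝ) + 1 ≤ b := by exact_mod_cast Nat.mod_lt i (by omega)
    have htail := ih (i / b) (Nat.div_lt_self hi hb)
    rw [radInv_eq_mod_add_radInv_div hb, div_lt_one hbR]
    linarith

theorem floor_pow_mul_radInv_lt (hb : 1 < b) (r i : ℕ) : ⌊(b : ℝ) ^ r * radInv b i⌋₊ < b ^ r := by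
  have hpow : (0 : ℝ) < (b : ℝ) ^ r := by positivity
  rw [Nat.floor_lt (pow_mul_radInv_nonneg r i), Nat.cast_pow]
  simpa using mul_lt_mul_of_pos_left (radInv_lt_one hb i) hpow

theorem floor_pow_succ_mul_radInv (hb : 1 < b) (r i : ℕ) :
    ⌊(b : ℝ) ^ (r + 1) * radInv b i⌋₊ = ⌊(b : ℝ) ^ r * radInv b (i / b)⌋₊ + b ^ r * (i % b) := by
  have hbR : (b : ℝ) ≠ 0 := by positivity
  have hsplit : (b : ℝ) ^ (r + 1) * radInv b i
      = (b : ℝ) ^ r * radInv b (i / b) + ((b ^ r * (i % b) : ℕ) : ℝ) := by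
    rw [radInv_eq_mod_add_radInv_div hb, pow_succ]
    push_cast
    field_simp
    ring
  rw [hsplit, Nat.floor_add_natCast (pow_mul_radInv_nonneg r (i / b))]

theorem floor_pow_mul_radInv_eq_iff (hb : 1 < b) (r i i' : ℕ) :
    ⌊(b : ℝ) ^ r * radInv b i⌋₊ = ⌊(b : ℝ) ^ r * radInv b i'⌋₊ ↔ i % b ^ r = i' % b ^ r := by
  induction r generalizing i i' with
  | zero =>
    simp [Nat.floor_eq_zero.2 (radInv_lt_one hb _), Nat.mod_one]
  | succ r ih =>
    rw [floor_pow_succ_mul_radInv hb, floor_pow_succ_mul_radInv hb,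
      Nat.add_mul_eq_add_mul_iff (floor_pow_mul_radInv_lt hb r _) (floor_pow_mul_radInv_lt hb r _),
      pow_succ', Nat.mod_mul, Nat.mod_mul,
      Nat.add_mul_eq_add_mul_iff (Nat.mod_lt _ (by omega)) (Nat.mod_lt _ (by omega)), ih, and_comm]

end RadicalInverse

theorem stmt7 (b : ℕ) (hb : 2 ≤ b) (i i' r : ℕ) :
    ⌊(b : ℝ) ^ r * radInv b i⌋ = ⌊(b : ℝ) ^ r * radInv b i'⌋ ↔
      i % b ^ r = i' % b ^ r := by
  rw [← Int.natCast_floor_eq_floor (pow_mul_radInv_nonneg r i),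
    ← Int.natCast_floor_eq_floor (pow_mul_radInv_nonneg r i'), Nat.cast_inj]
  exact floor_pow_mul_radInv_eq_iff hb r i i'
end

section
/- Define the unnormalized gain G̃_{u,k}(n) = ∑_{v⊆u} H_{u,v} C(m_{u,v,k}, n), where H_{u,v} = ∏_{j∈v} b_j ·(−1)^{|u∖v|}, m_{u,v,k} = ∏_{j∈v} b_j^{k_j+1} ∏_{j∈u∖v} b_j^{k_j}, and C(m,n) counts congruent pairs mod m among 0,…,n−1. If 1 ≤ n < ∏_{j∈u} b_j^{k_j}, then G̃_{u,k}(n) = n·∏_{j∈u}(b_j − 1); equivalently the normalized gain G_{u,k}(n) = G̃_{u,k}(n)/(n·∏_{j∈u}(b_j−1)) equals 1. -/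
/-- `m_{u,v,k} = ∏_{j∈v} b_j^{k_j+1} · ∏_{j∈u∖v} b_j^{k_j}`. -/
def mProd (b k : ℕ → ℕ) (u v : Finset ℕ) : ℕ :=
  (∏ j ∈ v, b j ^ (k j + 1)) * ∏ j ∈ u \ v, b j ^ k j

/-- Unnormalized gain `G̃_{u,k}(n) = ∑_{v⊆u} H_{u,v} C(m_{u,v,k}, n)`. -/
noncomputable def Gt (b k : ℕ → ℕ) (u : Finset ℕ) (n : ℕ) : ℝ :=
  ∑ v ∈ u.powerset,
    (∏ j ∈ v, (b j : ℝ)) * (-1) ^ (u \ v).card * (Cpairs (mProd b k u v) n : ℝ)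

/-- Normalized gain coefficient `G_{u,k}(n)`. -/
noncomputable def Gn (b k : ℕ → ℕ) (u : Finset ℕ) (n : ℕ) : ℝ :=
  Gt b k u n / (n * ∏ j ∈ u, ((b j : ℝ) - 1))

theorem Cpairs_of_le {m n : ℕ} (h : n ≤ m) : Cpairs m n = n := by
  have hdiag : ((Finset.range n ×ˢ Finset.range n).filter fun p => p.1 % m = p.2 % m)
      = (Finset.range n).diag := by
    rw [Finset.diag_eq_filter]
    refine Finset.filter_congr fun p hp => ?_
    obtain ⟨h1, h2⟩ := Finset.mem_product.mp hp
    rw [Nat.mod_eq_of_lt (lt_of_lt_of_le (Finset.mem_range.mp h1) h),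
      Nat.mod_eq_of_lt (lt_of_lt_of_le (Finset.mem_range.mp h2) h)]
  rw [Cpairs, hdiag, Finset.diag_card, Finset.card_range]

theorem prod_pow_le_mProd (b k : ℕ → ℕ) {u v : Finset ℕ} (hv : v ⊆ u)
    (hb : ∀ j ∈ v, 0 < b j) : ∏ j ∈ u, b j ^ k j ≤ mProd b k u v := by
  rw [mProd, ← Finset.prod_sdiff hv, mul_comm]
  refine Nat.mul_le_mul_right _ (Finset.prod_le_prod' fun j hj => ?_)
  exact Nat.pow_le_pow_right (hb j hj) (Nat.le_succ _)

theorem Finset.prod_sub_one_eq_sum_powerset {R ι : Type*} [CommRing R] [DecidableEq ι]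
    (f : ι → R) (s : Finset ι) :
    ∏ i ∈ s, (f i - 1) = ∑ t ∈ s.powerset, (∏ i ∈ t, f i) * (-1) ^ (s \ t).card := by
  simp only [sub_eq_add_neg, Finset.prod_add, Finset.prod_const]

theorem Gt_eq_of_lt (b k : ℕ → ℕ) {u : Finset ℕ} (hb : ∀ j ∈ u, 0 < b j) {n : ℕ}
    (hn : n < ∏ j ∈ u, b j ^ k j) : Gt b k u n = n * ∏ j ∈ u, ((b j : ℝ) - 1) := by
  rw [Gt, Finset.prod_sub_one_eq_sum_powerset, Finset.mul_sum]
  refine Finset.sum_congr rfl fun v hv => ?_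
  have hvu := Finset.mem_powerset.mp hv
  rw [Cpairs_of_le (hn.le.trans (prod_pow_le_mProd b k hvu fun j hj => hb j (hvu hj)))]
  ring

theorem stmt9_general (u : Finset ℕ) (b k : ℕ → ℕ)
    (hb : ∀ j ∈ u, 2 ≤ b j)
    (n : ℕ) (hn1 : 1 ≤ n) (hn2 : n < ∏ j ∈ u, b j ^ k j) :
    Gt b k u n = (n : ℝ) * ∏ j ∈ u, ((b j : ℝ) - 1) ∧ Gn b k u n = 1 := by
  have hGt := Gt_eq_of_lt b k (fun j hj => (hb j hj).trans_lt' two_pos) hn2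
  refine ⟨hGt, ?_⟩
  have hn : (n : ℝ) ≠ 0 := by exact_mod_cast (Nat.one_le_iff_ne_zero.mp hn1)
  have hprod : ∏ j ∈ u, ((b j : ℝ) - 1) ≠ 0 := Finset.prod_ne_zero_iff.mpr fun j hj => by
    have : (2 : ℝ) ≤ b j := by exact_mod_cast hb j hj
    linarith
  rw [Gn, hGt, div_self (mul_ne_zero hn hprod)]

theorem stmt9 (u : Finset ℕ) (hu : u.Nonempty) (b k : ℕ → ℕ)
    (hb : ∀ j ∈ u, 2 ≤ b j)
    (hcop : ∀ i ∈ u, ∀ j ∈ u, i ≠ j → Nat.Coprime (b i) (b j))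
    (n : ℕ) (hn1 : 1 ≤ n) (hn2 : n < ∏ j ∈ u, b j ^ k j) :
    Gt b k u n = (n : ℝ) * ∏ j ∈ u, ((b j : ℝ) - 1) ∧ Gn b k u n = 1 :=
  stmt9_general u b k hb n hn1 hn2
end

section
/- Fix j* ∈ u and define k' from k by k'_{j*} = k_{j*} + 1 and k'_ℓ = k_ℓ otherwise. Then for all n ≥ 1, C(m_{u,v,k'}, b_{j*}·n) = b_{j*}·C(m_{u,v,k}, n) for every v ⊆ u, and consequently G_{u,k'}(b_{j*}·n) = G_{u,k}(n). -/
/-! Raising `k_{j*}` by one multiplies every modulus `m_{u,v,k}` by `b_{j*}`, and scaling both the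
modulus and the range of a congruence-pair count by `b` multiplies the count by `b` (split each
index into its last base-`b` digit and the rest). So every term of `G̃_{u,k}` gets the factor
`b_{j*}`, which cancels against the factor `b_{j*}` in the normalization of `G`. -/

open Finset Function

theorem Nat.mod_mul_eq_mod_mul_iff {i j b m : ℕ} :
    i % (b * m) = j % (b * m) ↔ i % b = j % b ∧ i / b % m = j / b % m := by
  refine ⟨fun h => ?_, fun ⟨hmod, hdiv⟩ => ?_⟩
  · rw [← Nat.mod_mul_right_mod i b m, ← Nat.mod_mul_right_div_self i b m, h,
      Nat.mod_mul_right_mod, Nat.mod_mul_right_div_self]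
    exact ⟨rfl, rfl⟩
  · rw [Nat.mod_mul, Nat.mod_mul, hmod, hdiv]

theorem Cpairs_mul_mul (b m n : ℕ) : Cpairs (b * m) (b * n) = b * Cpairs m n := by
  have hbij : Cpairs (b * m) (b * n) =
      #(((range n ×ˢ range n).filter fun p => p.1 % m = p.2 % m) ×ˢ range b) := by
    refine card_nbij' (fun p => ((p.1 / b, p.2 / b), p.1 % b))
      (fun x => (b * x.1.1 + x.2, b * x.1.2 + x.2)) ?_ ?_ ?_ ?_
    · rintro ⟨i, j⟩ h
      simp only [coe_filter, mem_product, mem_range, Set.mem_ofPred_eq, coe_product,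
        Set.mem_prod, mem_coe] at h ⊢
      obtain ⟨⟨hi, hj⟩, hij⟩ := h
      have hb : 0 < b := Nat.pos_of_ne_zero (by rintro rfl; simp at hi)
      obtain ⟨-, hdiv⟩ := Nat.mod_mul_eq_mod_mul_iff.1 hij
      exact ⟨⟨⟨(Nat.div_lt_iff_lt_mul hb).2 (by linarith),
        (Nat.div_lt_iff_lt_mul hb).2 (by linarith)⟩, hdiv⟩, Nat.mod_lt i hb⟩
    · rintro ⟨⟨q, q'⟩, s⟩ h
      simp only [coe_filter, mem_product, mem_range, Set.mem_ofPred_eq, coe_product,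
        Set.mem_prod, mem_coe] at h ⊢
      obtain ⟨⟨⟨hq, hq'⟩, hqq'⟩, hs⟩ := h
      refine ⟨⟨by nlinarith, by nlinarith⟩, Nat.mod_mul_eq_mod_mul_iff.2 ?_⟩
      simp [Nat.mul_add_div (by omega : 0 < b), Nat.div_eq_of_lt hs, hqq']
    · rintro ⟨i, j⟩ h
      simp only [coe_filter, mem_product, mem_range, Set.mem_ofPred_eq] at h
      obtain ⟨hmod, -⟩ := Nat.mod_mul_eq_mod_mul_iff.1 h.2
      simp only [Prod.mk.injEq]
      exact ⟨Nat.div_add_mod i b, hmod ▸ Nat.div_add_mod j b⟩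
    · rintro ⟨⟨q, q'⟩, s⟩ h
      simp only [coe_product, Set.mem_prod, mem_coe, mem_range] at h
      have hb : 0 < b := by omega
      simp [Nat.mul_add_div hb, Nat.div_eq_of_lt h.2, Nat.mod_eq_of_lt h.2]
  rw [hbij, card_product, card_range, mul_comm, Cpairs]

theorem prod_pow_update_succ {ι M : Type*} [DecidableEq ι] [CommMonoid M] (s : Finset ι)
    (b : ι → M) (k : ι → ℕ) (j : ι) (e : ℕ) :
    ∏ i ∈ s, b i ^ (update k j (k j + 1) i + e) =
      (if j ∈ s then b j else 1) * ∏ i ∈ s, b i ^ (k i + e) := by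
  rw [← prod_ite_eq' s j b, ← prod_mul_distrib]
  refine prod_congr rfl fun i _ => ?_
  rcases eq_or_ne i j with rfl | hij
  · rw [update_self, if_pos rfl, add_right_comm, pow_succ']
  · simp [hij]

theorem mProd_update_succ (b k : ℕ → ℕ) {u v : Finset ℕ} {j : ℕ} (hj : j ∈ u) :
    mProd b (update k j (k j + 1)) u v = b j * mProd b k u v := by
  have h := prod_pow_update_succ (u \ v) b k j 0
  simp only [add_zero] at h
  unfold mProd
  rw [prod_pow_update_succ, h]
  by_cases hjv : j ∈ v <;> simp [hjv, hj] <;> ring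

theorem Gt_update_succ (b k : ℕ → ℕ) {u : Finset ℕ} {j : ℕ} (hj : j ∈ u) (n : ℕ) :
    Gt b (update k j (k j + 1)) u (b j * n) = b j * Gt b k u n := by
  unfold Gt
  rw [mul_sum]
  refine sum_congr rfl fun v _ => ?_
  rw [mProd_update_succ b k hj, Cpairs_mul_mul]
  push_cast
  ring

theorem Gn_update_succ (b k : ℕ → ℕ) {u : Finset ℕ} {j : ℕ} (hj : j ∈ u) (hbj : b j ≠ 0)
    (n : ℕ) : Gn b (update k j (k j + 1)) u (b j * n) = Gn b k u n := by
  unfold Gn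
  rw [Gt_update_succ b k hj, Nat.cast_mul, mul_assoc]
  exact mul_div_mul_left _ _ (Nat.cast_ne_zero.2 hbj)

theorem stmt12_general (u : Finset ℕ) (b k : ℕ → ℕ)
    (hb : ∀ j ∈ u, 2 ≤ b j)
    (jstar : ℕ) (hjstar : jstar ∈ u)
    (k' : ℕ → ℕ) (hk' : k' = Function.update k jstar (k jstar + 1))
    (n : ℕ) :
    (∀ v ∈ u.powerset,
        Cpairs (mProd b k' u v) (b jstar * n) = b jstar * Cpairs (mProd b k u v) n) ∧
      Gn b k' u (b jstar * n) = Gn b k u n := by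
  subst hk'
  refine ⟨fun v _ => ?_, Gn_update_succ b k hjstar (by linarith [hb jstar hjstar]) n⟩
  rw [mProd_update_succ b k hjstar, Cpairs_mul_mul]

theorem stmt12 (u : Finset ℕ) (hu : u.Nonempty) (b k : ℕ → ℕ)
    (hb : ∀ j ∈ u, 2 ≤ b j)
    (hcop : ∀ i ∈ u, ∀ j ∈ u, i ≠ j → Nat.Coprime (b i) (b j))
    (jstar : ℕ) (hjstar : jstar ∈ u)
    (k' : ℕ → ℕ) (hk' : k' = Function.update k jstar (k jstar + 1))
    (n : ℕ) (hn : 1 ≤ n) :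
    (∀ v ∈ u.powerset,
        Cpairs (mProd b k' u v) (b jstar * n) = b jstar * Cpairs (mProd b k u v) n) ∧
      Gn b k' u (b jstar * n) = Gn b k u n :=
  stmt12_general u b k hb jstar hjstar k' hk' n
end

section
/- If v ⊆ u are nonempty finite index sets (with pairwise coprime bases b_j ≥ 2), then sup_{n≥1} G_{v,0}(n) ≤ sup_{n≥1} G_{u,0}(n): the supremum of gain coefficients is monotone under taking supersets of coordinates. -/
/-!
By the Chinese remainder theorem, `G̃_{s,0}(n)` is the sum over pairs `i, i' < n` of
`∏_{j ∈ s} (b_j [i ≡ i' mod b_j] - 1)`. For `a ∉ s` the factor of `a` plus one is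
`b_a [i ≡ i' mod b_a]`; writing `i = x b_a + ρ` and using that `b_a` is coprime to the other
bases, this gives `b_a G_s(n) = G_s(n b_a) + (b_a - 1) G_{s ∪ {a}}(n b_a)`. Hence, with
`Γ_s = gainSup b s`, `b_a Γ_s ≤ Γ_s + (b_a - 1) Γ_{s ∪ {a}}`, i.e. `Γ_s ≤ Γ_{s ∪ {a}}`, and the
coordinates of `u \ v` are added one at a time.

The suprema are finite, so `sSup` is not a junk value: `n² ≤ m C(m, n) ≤ n² + m n`, and for
nonempty `s` the `n²` terms cancel in the alternating sum, leaving
`G_{s,0}(n) ≤ ∏ (b_j + 1) / ∏ (b_j - 1)`.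
-/

open Finset
open scoped Function

section Cpairs

variable {m n : ℕ}

lemma Cpairs_eq_sum_sq (hm : 0 < m) :
    Cpairs m n = ∑ c ∈ range m, #{i ∈ range n | i % m = c} ^ 2 := by
  rw [Cpairs, card_eq_sum_card_fiberwise (f := fun p => p.1 % m) (t := range m)
    fun p _ => mem_range.2 (Nat.mod_lt _ hm)]
  refine sum_congr rfl fun c _ => ?_
  rw [sq, ← card_product]
  congr 1
  ext ⟨i, i'⟩
  simp only [mem_filter, mem_product]
  constructor
  · rintro ⟨⟨⟨hi, hi'⟩, hii'⟩, rfl⟩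
    exact ⟨⟨hi, rfl⟩, hi', hii'.symm⟩
  · rintro ⟨⟨hi, rfl⟩, hi', hii'⟩
    exact ⟨⟨⟨hi, hi'⟩, hii'.symm⟩, rfl⟩

lemma sum_card_filter_mod_eq (hm : 0 < m) :
    ∑ c ∈ range m, #{i ∈ range n | i % m = c} = n := by
  rw [← card_eq_sum_card_fiberwise fun i _ => mem_range.2 (Nat.mod_lt i hm), card_range]

lemma card_filter_mod_eq_le (c : ℕ) :
    #{i ∈ range n | i % m = c} ≤ n / m + 1 := by
  simpa using card_le_card_of_injOn (t := range (n / m + 1)) (· / m)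
    (fun i hi => by
      simp only [coe_filter, mem_range, Set.mem_ofPred_eq, coe_range, Set.mem_Iio] at hi ⊢
      exact Nat.lt_succ_of_le (Nat.div_le_div_right hi.1.le))
    (fun i hi j hj hij => by
      simp only [coe_filter, mem_range, Set.mem_ofPred_eq] at hi hj
      rw [← Nat.div_add_mod i m, ← Nat.div_add_mod j m, hi.2, hj.2]
      simp only at hij
      rw [hij])

lemma sq_le_mul_Cpairs (hm : 0 < m) : n ^ 2 ≤ m * Cpairs m n := by
  calc n ^ 2 = (∑ c ∈ range m, #{i ∈ range n | i % m = c}) ^ 2 := by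
        rw [sum_card_filter_mod_eq hm]
    _ ≤ #(range m) * ∑ c ∈ range m, #{i ∈ range n | i % m = c} ^ 2 :=
        sq_sum_le_card_mul_sum_sq
    _ = m * Cpairs m n := by rw [card_range, Cpairs_eq_sum_sq hm]

lemma mul_Cpairs_le (hm : 0 < m) : m * Cpairs m n ≤ n ^ 2 + m * n := by
  have hsum : ∑ c ∈ range m, #{i ∈ range n | i % m = c} ^ 2 ≤ (n / m + 1) * n :=
    calc _ ≤ ∑ c ∈ range m, (n / m + 1) * #{i ∈ range n | i % m = c} :=
          sum_le_sum fun c _ => by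
            rw [sq]; exact Nat.mul_le_mul_right _ (card_filter_mod_eq_le c)
      _ = (n / m + 1) * n := by rw [← mul_sum, sum_card_filter_mod_eq hm]
  calc m * Cpairs m n ≤ m * ((n / m + 1) * n) := by
        rw [Cpairs_eq_sum_sq hm]; exact Nat.mul_le_mul_left _ hsum
    _ = m * (n / m) * n + m * n := by ring
    _ ≤ n ^ 2 + m * n := by
        rw [sq]; gcongr; exact Nat.mul_div_le n m

lemma Cpairs_eq_sum_ite {R : Type*} [AddCommMonoidWithOne R] (m n : ℕ) :
    (Cpairs m n : R) = ∑ i ∈ range n, ∑ i' ∈ range n, if i % m = i' % m then (1 : R) else 0 := by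
  rw [Cpairs, natCast_card_filter, sum_product]

end Cpairs

lemma Nat.modEq_finset_prod_iff {ι : Type*} {s : Finset ι} {b : ι → ℕ}
    (hs : (s : Set ι).Pairwise (Nat.Coprime on b)) {x y : ℕ} :
    x ≡ y [MOD ∏ j ∈ s, b j] ↔ ∀ j ∈ s, x ≡ y [MOD b j] := by
  rw [← prod_map_toList]
  simpa using Nat.modEq_list_map_prod_iff
    (s.nodup_toList.pairwise_of_set_pairwise (by simpa using hs))

lemma sum_powerset_neg_one_pow_card_sdiff {ι R : Type*} [DecidableEq ι] [CommRing R]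
    {s : Finset ι} (hs : s.Nonempty) :
    ∑ t ∈ s.powerset, (-1 : R) ^ #(s \ t) = 0 := by
  simpa [hs.ne_empty] using (prod_add (fun _ => (1 : R)) (fun _ => -1) s).symm

section PairSum

variable (b : ℕ → ℕ)

noncomputable def pairWeight (s : Finset ℕ) (i i' : ℕ) : ℝ :=
  ∏ j ∈ s, ((b j : ℝ) * (if i % b j = i' % b j then 1 else 0) - 1)

noncomputable def pairSum (s : Finset ℕ) (n : ℕ) : ℝ :=
  ∑ i ∈ range n, ∑ i' ∈ range n, pairWeight b s i i'

variable {b}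

lemma pairWeight_eq_sum_powerset {s : Finset ℕ} (hs : (s : Set ℕ).Pairwise (Nat.Coprime on b))
    (i i' : ℕ) :
    pairWeight b s i i' = ∑ t ∈ s.powerset, (∏ j ∈ t, (b j : ℝ)) * (-1) ^ #(s \ t) *
      (if i % ∏ j ∈ t, b j = i' % ∏ j ∈ t, b j then 1 else 0) := by
  simp_rw [pairWeight, sub_eq_add_neg, prod_add, prod_mul_distrib, prod_boole, prod_const]
  refine sum_congr rfl fun t ht => ?_
  have hcrt := Nat.modEq_finset_prod_iff (x := i) (y := i')
    (hs.mono (by simpa using mem_powerset.1 ht))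
  simp only [Nat.ModEq] at hcrt
  simp only [← hcrt]
  ring

lemma Gt_eq_pairSum {s : Finset ℕ} (hs : (s : Set ℕ).Pairwise (Nat.Coprime on b)) (n : ℕ) :
    Gt b (fun _ => 0) s n = pairSum b s n := by
  simp_rw [pairSum, pairWeight_eq_sum_powerset hs, Gt, mProd, zero_add, pow_zero, prod_const_one,
    pow_one, mul_one, Cpairs_eq_sum_ite, mul_sum]
  rw [sum_comm]
  exact sum_congr rfl fun _ _ => sum_comm

lemma sum_range_mul_eq_sum_sum (f : ℕ → ℝ) (n m : ℕ) :
    ∑ i ∈ range (n * m), f i = ∑ x ∈ range n, ∑ ρ ∈ range m, f (x * m + ρ) := by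
  induction n with
  | zero => simp
  | succ n ih => rw [Nat.succ_mul, sum_range_add, ih, sum_range_succ]

lemma sum_range_mul_sum_range_mul_ite_mod_eq (f : ℕ → ℕ → ℝ) (n m : ℕ) :
    ∑ i ∈ range (n * m), ∑ i' ∈ range (n * m), (if i % m = i' % m then f i i' else 0) =
      ∑ x ∈ range n, ∑ ρ ∈ range m, ∑ x' ∈ range n, f (x * m + ρ) (x' * m + ρ) := by
  have hmod : ∀ x ρ, ρ < m → (x * m + ρ) % m = ρ := fun x ρ h => by
    rw [Nat.mul_add_mod_self_right, Nat.mod_eq_of_lt h]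
  simp_rw [sum_range_mul_eq_sum_sum _ n m]
  refine sum_congr rfl fun x _ => sum_congr rfl fun ρ hρ => sum_congr rfl fun x' _ => ?_
  rw [sum_eq_single_of_mem ρ hρ fun ρ' hρ' hne => ?_]
  · rw [hmod x ρ (mem_range.1 hρ), hmod x' ρ (mem_range.1 hρ), if_pos rfl]
  · rw [hmod x ρ (mem_range.1 hρ), hmod x' ρ' (mem_range.1 hρ'), if_neg (Ne.symm hne)]

lemma pairWeight_insert {s : Finset ℕ} {a : ℕ} (ha : a ∉ s) (i i' : ℕ) :
    pairWeight b (insert a s) i i' =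
      ((b a : ℝ) * (if i % b a = i' % b a then 1 else 0) - 1) * pairWeight b s i i' :=
  prod_insert ha

lemma pairWeight_mul_add_mul_add {s : Finset ℕ} {m : ℕ} (hm : ∀ j ∈ s, Nat.Coprime (b j) m)
    (x x' ρ : ℕ) : pairWeight b s (x * m + ρ) (x' * m + ρ) = pairWeight b s x x' := by
  refine prod_congr rfl fun j hj => ?_
  have hshift : x * m + ρ ≡ x' * m + ρ [MOD b j] ↔ x ≡ x' [MOD b j] :=
    ⟨fun h => (Nat.ModEq.add_right_cancel' ρ h).cancel_right_of_coprime (hm j hj),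
      fun h => (h.mul_right m).add_right ρ⟩
  simp only [Nat.ModEq] at hshift
  simp only [hshift]

lemma pairSum_mul_add_pairSum_insert_mul {s : Finset ℕ} {a : ℕ} (ha : a ∉ s)
    (hcop : ∀ j ∈ s, Nat.Coprime (b j) (b a)) (n : ℕ) :
    pairSum b s (n * b a) + pairSum b (insert a s) (n * b a) = (b a : ℝ) ^ 2 * pairSum b s n := by
  have hweight : ∀ i i', pairWeight b s i i' + pairWeight b (insert a s) i i' =
      b a * if i % b a = i' % b a then pairWeight b s i i' else 0 := by
    intro i i'
    rw [pairWeight_insert ha]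
    split_ifs <;> ring
  simp_rw [pairSum, ← sum_add_distrib, hweight, ← mul_sum,
    sum_range_mul_sum_range_mul_ite_mod_eq, pairWeight_mul_add_mul_add hcop, sum_const,
    card_range, nsmul_eq_mul, ← mul_sum]
  ring

end PairSum

section Gain

variable {b : ℕ → ℕ} {s : Finset ℕ}

lemma prod_sub_one_pos (hb : ∀ j ∈ s, 2 ≤ b j) : 0 < ∏ j ∈ s, ((b j : ℝ) - 1) :=
  prod_pos fun j hj => by
    have : (2 : ℝ) ≤ b j := by exact_mod_cast hb j hj
    linarith

lemma pairSum_eq_mul_Gn (hb : ∀ j ∈ s, 2 ≤ b j) (hcop : (s : Set ℕ).Pairwise (Nat.Coprime on b))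
    (n : ℕ) : pairSum b s n = n * (∏ j ∈ s, ((b j : ℝ) - 1)) * Gn b (fun _ => 0) s n := by
  rw [Gn, ← Gt_eq_pairSum hcop, mul_div_cancel_of_imp']
  intro h
  obtain rfl : n = 0 := by
    simpa [(prod_sub_one_pos hb).ne'] using h
  simp [Gt_eq_pairSum hcop, pairSum]

lemma mul_Gn_eq_Gn_mul_add_mul_Gn_insert {n a : ℕ} (hn : 0 < n) (ha : a ∉ s)
    (hb : ∀ j ∈ insert a s, 2 ≤ b j)
    (hcop : (insert a s : Set ℕ).Pairwise (Nat.Coprime on b)) :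
    b a * Gn b (fun _ => 0) s n =
      Gn b (fun _ => 0) s (n * b a) + (b a - 1) * Gn b (fun _ => 0) (insert a s) (n * b a) := by
  have hbs : ∀ j ∈ s, 2 ≤ b j := fun j hj => hb j (mem_insert_of_mem hj)
  have hcops : (s : Set ℕ).Pairwise (Nat.Coprime on b) :=
    hcop.mono (by simp [Set.subset_insert])
  have hcopa : ∀ j ∈ s, Nat.Coprime (b j) (b a) := fun j hj =>
    hcop (by simp [hj]) (by simp) (by rintro rfl; exact ha hj)
  have key := pairSum_mul_add_pairSum_insert_mul ha hcopa n
  rw [pairSum_eq_mul_Gn hbs hcops, pairSum_eq_mul_Gn hb (by simpa using hcop),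
    pairSum_eq_mul_Gn hbs hcops, prod_insert ha] at key
  have hpos : (0 : ℝ) < n * b a * ∏ j ∈ s, ((b j : ℝ) - 1) := by
    have hba : (2 : ℝ) ≤ b a := by exact_mod_cast hb a (mem_insert_self a s)
    have hD := prod_sub_one_pos hbs
    positivity
  apply mul_left_cancel₀ hpos.ne'
  push_cast at key
  linear_combination -key

lemma Gt_le_mul_prod_add_one (hs : s.Nonempty) (hb : ∀ j ∈ s, 0 < b j) (n : ℕ) :
    Gt b (fun _ => 0) s n ≤ n * ∏ j ∈ s, ((b j : ℝ) + 1) := by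
  have hterm : ∀ t ∈ s.powerset, (∏ j ∈ t, (b j : ℝ)) * (-1) ^ #(s \ t) *
      (Cpairs (∏ j ∈ t, b j) n : ℝ) ≤
        (-1) ^ #(s \ t) * (n : ℝ) ^ 2 + (∏ j ∈ t, (b j : ℝ)) * n := by
    intro t ht
    have hm : 0 < ∏ j ∈ t, b j := prod_pos fun j hj => hb j (mem_powerset.1 ht hj)
    have hlow : (n : ℝ) ^ 2 ≤ (∏ j ∈ t, (b j : ℝ)) * Cpairs (∏ j ∈ t, b j) n := by
      exact_mod_cast sq_le_mul_Cpairs hm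
    have hup : (∏ j ∈ t, (b j : ℝ)) * Cpairs (∏ j ∈ t, b j) n ≤
        (n : ℝ) ^ 2 + (∏ j ∈ t, (b j : ℝ)) * n := by
      exact_mod_cast mul_Cpairs_le hm
    rcases neg_one_pow_eq_or ℝ #(s \ t) with h | h <;> rw [h] <;> nlinarith
  calc Gt b (fun _ => 0) s n
      = ∑ t ∈ s.powerset, (∏ j ∈ t, (b j : ℝ)) * (-1) ^ #(s \ t) *
          (Cpairs (∏ j ∈ t, b j) n : ℝ) := by
        simp [Gt, mProd]
    _ ≤ ∑ t ∈ s.powerset, ((-1) ^ #(s \ t) * (n : ℝ) ^ 2 + (∏ j ∈ t, (b j : ℝ)) * n) :=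
        sum_le_sum hterm
    _ = n * ∏ j ∈ s, ((b j : ℝ) + 1) := by
        rw [sum_add_distrib, ← sum_mul, sum_powerset_neg_one_pow_card_sdiff hs, ← sum_mul,
          ← prod_add_one]
        ring

lemma Gn_le_prod_add_one_div_prod_sub_one (hs : s.Nonempty) (hb : ∀ j ∈ s, 2 ≤ b j) (n : ℕ) :
    Gn b (fun _ => 0) s n ≤ (∏ j ∈ s, ((b j : ℝ) + 1)) / ∏ j ∈ s, ((b j : ℝ) - 1) := by
  have hD := prod_sub_one_pos hb
  have hP : 0 < ∏ j ∈ s, ((b j : ℝ) + 1) := prod_pos fun j _ => by positivity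
  refine div_le_of_le_mul₀ (by positivity) (by positivity) ?_
  calc Gt b (fun _ => 0) s n ≤ n * ∏ j ∈ s, ((b j : ℝ) + 1) :=
        Gt_le_mul_prod_add_one hs (fun j hj => by have := hb j hj; omega) n
    _ = _ := by field_simp

end Gain

noncomputable def gainSup (b : ℕ → ℕ) (s : Finset ℕ) : ℝ :=
  sSup {x : ℝ | ∃ n : ℕ, 1 ≤ n ∧ x = Gn b (fun _ => 0) s n}

section GainSup

variable {b : ℕ → ℕ} {s : Finset ℕ}

lemma Gn_le_gainSup (hs : s.Nonempty) (hb : ∀ j ∈ s, 2 ≤ b j) {n : ℕ} (hn : 1 ≤ n) :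
    Gn b (fun _ => 0) s n ≤ gainSup b s :=
  le_csSup ⟨_, by rintro _ ⟨m, -, rfl⟩; exact Gn_le_prod_add_one_div_prod_sub_one hs hb m⟩
    ⟨n, hn, rfl⟩

lemma gainSup_le_gainSup_insert {a : ℕ} (hs : s.Nonempty) (ha : a ∉ s)
    (hb : ∀ j ∈ insert a s, 2 ≤ b j)
    (hcop : (insert a s : Set ℕ).Pairwise (Nat.Coprime on b)) :
    gainSup b s ≤ gainSup b (insert a s) := by
  have hbs : ∀ j ∈ s, 2 ≤ b j := fun j hj => hb j (mem_insert_of_mem hj)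
  have hba : (2 : ℝ) ≤ b a := by exact_mod_cast hb a (mem_insert_self a s)
  have hmean : gainSup b s ≤ (gainSup b s + (b a - 1) * gainSup b (insert a s)) / b a := by
    refine csSup_le ⟨_, 1, le_rfl, rfl⟩ ?_
    rintro _ ⟨n, hn, rfl⟩
    rw [le_div_iff₀ (by positivity), mul_comm, mul_Gn_eq_Gn_mul_add_mul_Gn_insert hn ha hb hcop]
    have hN : 1 ≤ n * b a := Nat.mul_pos hn (by have := hb a (mem_insert_self a s); omega)
    gcongr
    · exact Gn_le_gainSup hs hbs hN
    · linarith
    · exact Gn_le_gainSup (insert_nonempty a s) hb hN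
  rw [le_div_iff₀ (by positivity)] at hmean
  nlinarith

lemma gainSup_mono {u v : Finset ℕ} (hv : v.Nonempty) (hvu : v ⊆ u) (hb : ∀ j ∈ u, 2 ≤ b j)
    (hcop : (u : Set ℕ).Pairwise (Nat.Coprime on b)) :
    gainSup b v ≤ gainSup b u := by
  suffices ∀ t ⊆ u \ v, gainSup b v ≤ gainSup b (v ∪ t) by
    simpa [union_sdiff_of_subset hvu] using this _ Subset.rfl
  intro t
  induction t using Finset.induction_on with
  | empty => simp
  | insert a t hat ih =>
    intro ht
    obtain ⟨ha, ht⟩ := insert_subset_iff.1 ht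
    obtain ⟨hau, hav⟩ := mem_sdiff.1 ha
    have hsub : insert a (v ∪ t) ⊆ u :=
      insert_subset hau (union_subset hvu (ht.trans sdiff_subset))
    rw [union_insert]
    exact (ih ht).trans <| gainSup_le_gainSup_insert (hv.mono subset_union_left)
      (by simp [hav, hat]) (fun j hj => hb j (hsub hj))
      (hcop.mono (by rw [← coe_insert]; exact coe_subset.2 hsub))

end GainSup

theorem stmt15 (u v : Finset ℕ) (hv : v.Nonempty) (hvu : v ⊆ u) (b : ℕ → ℕ)
    (hb : ∀ j ∈ u, 2 ≤ b j)
    (hcop : ∀ i ∈ u, ∀ j ∈ u, i ≠ j → Nat.Coprime (b i) (b j)) :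
    sSup {x : ℝ | ∃ n : ℕ, 1 ≤ n ∧ x = Gn b (fun _ => 0) v n} ≤
      sSup {x : ℝ | ∃ n : ℕ, 1 ≤ n ∧ x = Gn b (fun _ => 0) u n} :=
  gainSup_mono hv hvu hb fun i hi j hj => hcop i hi j hj
end
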